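/- arXiv:2410.24141 — 8 statements merged into one kernel-verified Lean document; each statement's English description precedes it below -/
import Mathlib

section
/- For real numbers v ∈ ℝ\{0} and w > 0, the limit as y → 1⁻ of ∫₀^y (1 - t^w)^(-1/v) dt equals (1/w)·B(1 - 1/v, 1/w) when v ∉ [0,1], and equals +∞ when v ∈ (0,1], where B denotes the Beta function. -/
/-! The substitution `t = u ^ (1 / w)` turns `∫₀¹ (1 - t ^ w) ^ p dt` into Euler's Beta integral
`(1 / w) ∫₀¹ u ^ (1 / w - 1) (1 - u) ^ p du`, which converges exactly when `p > -1`; for `p = -1 / v`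
this means `v ∉ [0, 1]`, and then the primitive is continuous up to `1`. When `p ≤ -1`, the bound
`1 - t ^ w ≤ max w 1 * (1 - t)` (Bernoulli's inequality when `w ≥ 1`) bounds the integrand below by
`(max w 1 * (1 - t))⁻¹`, whose primitive `-log (1 - y) / max w 1` diverges as `y → 1⁻`. -/

open MeasureTheory Filter Set

/-- The real Beta function `B(a,b) = Γ(a)Γ(b)/Γ(a+b)`. -/
noncomputable def realBeta (a b : ℝ) : ℝ := Real.Gamma a * Real.Gamma b / Real.Gamma (a + b)

open Real Topology

lemma realBeta_comm (a b : ℝ) : realBeta a b = realBeta b a := by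
  rw [realBeta, realBeta, add_comm, mul_comm]

lemma ofReal_rpow_mul_one_sub_rpow {a b x : ℝ} (hx : x ∈ Icc (0:ℝ) 1) :
    ((x ^ (a - 1) * (1 - x) ^ (b - 1) : ℝ) : ℂ) =
      (x : ℂ) ^ ((a : ℂ) - 1) * (1 - (x : ℂ)) ^ ((b : ℂ) - 1) := by
  rw [Complex.ofReal_mul, Complex.ofReal_cpow hx.1, Complex.ofReal_cpow (sub_nonneg.2 hx.2)]
  push_cast
  rfl

lemma intervalIntegrable_rpow_mul_one_sub_rpow {a b : ℝ} (ha : 0 < a) (hb : 0 < b) :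
    IntervalIntegrable (fun x : ℝ => x ^ (a - 1) * (1 - x) ^ (b - 1)) volume 0 1 := by
  have h := Complex.betaIntegral_convergent (u := a) (v := b) (by simpa) (by simpa)
  rw [intervalIntegrable_iff_integrableOn_Icc_of_le zero_le_one] at h ⊢
  refine IntegrableOn.congr_fun (Integrable.re h) (fun x hx => ?_) measurableSet_Icc
  rw [← ofReal_rpow_mul_one_sub_rpow hx]
  rfl

lemma integral_rpow_mul_one_sub_rpow {a b : ℝ} (ha : 0 < a) (hb : 0 < b) :
    ∫ x in (0:ℝ)..1, x ^ (a - 1) * (1 - x) ^ (b - 1) = realBeta a b := by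
  have hB : Complex.betaIntegral a b = ∫ x in (0:ℝ)..1, x ^ (a - 1) * (1 - x) ^ (b - 1) := by
    rw [Complex.betaIntegral, ← intervalIntegral.integral_ofReal]
    refine intervalIntegral.integral_congr fun x hx => ?_
    rw [uIcc_of_le zero_le_one] at hx
    exact (ofReal_rpow_mul_one_sub_rpow hx).symm
  rw [Complex.betaIntegral_eq_Gamma_mul_div _ _ (by simpa) (by simpa)] at hB
  rw [realBeta, ← Complex.ofReal_inj, ← hB]
  push_cast
  rw [← Complex.ofReal_add]
  simp only [Complex.Gamma_ofReal]

section

variable {E : Type*} [NormedAddCommGroup E] [NormedSpace ℝ E] {c : ℝ}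

lemma tendsto_integral_nhdsLT_of_intervalIntegrable {f : ℝ → E} {a b : ℝ} (hab : a < b)
    (hf : IntervalIntegrable f volume a b) :
    Tendsto (fun y => ∫ t in a..y, f t) (𝓝[<] b) (𝓝 (∫ t in a..b, f t)) := by
  have hcont := intervalIntegral.continuousOn_primitive_interval' hf left_mem_uIcc
  rw [uIcc_of_le hab.le] at hcont
  have := (hcont b (right_mem_Icc.2 hab.le)).mono Ico_subset_Icc_self
  rwa [ContinuousWithinAt, nhdsWithin_Ico_eq_nhdsLT hab] at this

lemma image_rpow_Ioo_zero_one (hc : 0 < c) : (fun u : ℝ => u ^ c) '' Ioo 0 1 = Ioo 0 1 := by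
  ext t
  constructor
  · rintro ⟨u, ⟨hu0, hu1⟩, rfl⟩
    exact ⟨rpow_pos_of_pos hu0 c, rpow_lt_one hu0.le hu1 hc⟩
  · rintro ⟨ht0, ht1⟩
    exact ⟨t ^ c⁻¹, ⟨rpow_pos_of_pos ht0 _, rpow_lt_one ht0.le ht1 (inv_pos.2 hc)⟩,
      rpow_inv_rpow ht0.le hc.ne'⟩

lemma injOn_rpow_Ioo_zero_one (hc : 0 < c) : InjOn (fun u : ℝ => u ^ c) (Ioo 0 1) :=
  fun _ hx _ hy h => ((rpow_left_injOn hc.ne').eq_iff hx.1.le hy.1.le).1 h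

lemma abs_deriv_rpow_smul_eqOn (g : ℝ → E) (hc : 0 < c) :
    EqOn (fun u : ℝ => |c * u ^ (c - 1)| • g (u ^ c)) (fun u => (c * u ^ (c - 1)) • g (u ^ c))
      (Ioo 0 1) :=
  fun u hu => by simp only [abs_of_pos (mul_pos hc (rpow_pos_of_pos hu.1 (c - 1)))]

lemma hasDerivWithinAt_rpow_Ioo_zero_one :
    ∀ u ∈ Ioo (0:ℝ) 1, HasDerivWithinAt (fun u : ℝ => u ^ c) (c * u ^ (c - 1)) (Ioo 0 1) u :=
  fun _ hu => (hasDerivAt_rpow_const (Or.inl hu.1.ne')).hasDerivWithinAt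

lemma integrableOn_Ioo_zero_one_comp_rpow_iff (g : ℝ → E) (hc : 0 < c) :
    IntegrableOn (fun u : ℝ => (c * u ^ (c - 1)) • g (u ^ c)) (Ioo 0 1) ↔
      IntegrableOn g (Ioo 0 1) := by
  have h := integrableOn_image_iff_integrableOn_abs_deriv_smul measurableSet_Ioo
    hasDerivWithinAt_rpow_Ioo_zero_one (injOn_rpow_Ioo_zero_one hc) g
  rw [image_rpow_Ioo_zero_one hc, integrableOn_congr_fun (abs_deriv_rpow_smul_eqOn g hc)
    measurableSet_Ioo] at h
  exact h.symm

lemma integral_Ioo_zero_one_comp_rpow (g : ℝ → E) (hc : 0 < c) :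
    ∫ u in Ioo (0:ℝ) 1, (c * u ^ (c - 1)) • g (u ^ c) = ∫ t in Ioo (0:ℝ) 1, g t := by
  have h := integral_image_eq_integral_abs_deriv_smul measurableSet_Ioo
    hasDerivWithinAt_rpow_Ioo_zero_one (injOn_rpow_Ioo_zero_one hc) g
  rw [image_rpow_Ioo_zero_one hc, setIntegral_congr_fun measurableSet_Ioo
    (abs_deriv_rpow_smul_eqOn g hc)] at h
  exact h.symm

end

lemma one_sub_rpow_rpow_comp_rpow_eqOn {w : ℝ} (p : ℝ) (hw : 0 < w) :
    EqOn (fun u : ℝ => (1 / w * u ^ (1 / w - 1)) • (1 - (u ^ (1 / w)) ^ w) ^ p)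
      (fun u => 1 / w * (u ^ (1 / w - 1) * (1 - u) ^ (p + 1 - 1))) (Ioo 0 1) := by
  intro u hu
  simp only [smul_eq_mul, ← rpow_mul hu.1.le, one_div_mul_cancel hw.ne', rpow_one,
    add_sub_cancel_right, mul_assoc]

lemma intervalIntegrable_one_sub_rpow_rpow {w p : ℝ} (hw : 0 < w) (hp : -1 < p) :
    IntervalIntegrable (fun t : ℝ => (1 - t ^ w) ^ p) volume 0 1 := by
  have hbeta :=
    intervalIntegrable_rpow_mul_one_sub_rpow (one_div_pos.2 hw) (by linarith : 0 < p + 1)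
  rw [intervalIntegrable_iff_integrableOn_Ioo_of_le zero_le_one] at hbeta ⊢
  rw [← integrableOn_Ioo_zero_one_comp_rpow_iff _ (one_div_pos.2 hw),
    integrableOn_congr_fun (one_sub_rpow_rpow_comp_rpow_eqOn p hw) measurableSet_Ioo]
  exact hbeta.const_mul _

lemma integral_one_sub_rpow_rpow {w p : ℝ} (hw : 0 < w) (hp : -1 < p) :
    ∫ t in (0:ℝ)..1, (1 - t ^ w) ^ p = 1 / w * realBeta (p + 1) (1 / w) := by
  rw [intervalIntegral.integral_of_le zero_le_one, integral_Ioc_eq_integral_Ioo,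
    ← integral_Ioo_zero_one_comp_rpow _ (one_div_pos.2 hw),
    setIntegral_congr_fun measurableSet_Ioo (one_sub_rpow_rpow_comp_rpow_eqOn p hw),
    integral_const_mul, ← integral_Ioc_eq_integral_Ioo,
    ← intervalIntegral.integral_of_le zero_le_one,
    integral_rpow_mul_one_sub_rpow (one_div_pos.2 hw) (by linarith), realBeta_comm]

lemma one_sub_rpow_le_max_mul_one_sub {w t : ℝ} (ht0 : 0 ≤ t) (ht1 : t ≤ 1) :
    1 - t ^ w ≤ max w 1 * (1 - t) := by
  rcases le_total 1 w with hw | hw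
  · have bernoulli := one_add_mul_self_le_rpow_one_add (s := t - 1) (by linarith) hw
    rw [add_sub_cancel] at bernoulli
    rw [max_eq_left hw]
    linarith
  · rw [max_eq_right hw]
    linarith [self_le_rpow_of_le_one ht0 ht1 hw]

lemma continuousOn_one_sub_rpow_rpow {w : ℝ} (p : ℝ) (hw : 0 < w) :
    ContinuousOn (fun t : ℝ => (1 - t ^ w) ^ p) (Ico 0 1) := fun _ ht =>
  ((continuousAt_const.sub (continuousAt_rpow_const _ _ (Or.inr hw.le))).rpow_const
    (Or.inl (sub_pos.2 (rpow_lt_one ht.1 ht.2 hw)).ne')).continuousWithinAt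

lemma inv_max_mul_one_sub_le_one_sub_rpow_rpow {w p t : ℝ} (hw : 0 < w) (hp : p ≤ -1)
    (ht : t ∈ Ico (0:ℝ) 1) : (max w 1 * (1 - t))⁻¹ ≤ (1 - t ^ w) ^ p := by
  have hpos : 0 < 1 - t ^ w := sub_pos.2 (rpow_lt_one ht.1 ht.2 hw)
  calc (max w 1 * (1 - t))⁻¹ ≤ (1 - t ^ w)⁻¹ :=
        inv_anti₀ hpos (one_sub_rpow_le_max_mul_one_sub ht.1 ht.2.le)
    _ = (1 - t ^ w) ^ (-1 : ℝ) := (rpow_neg_one _).symm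
    _ ≤ (1 - t ^ w) ^ p :=
        rpow_le_rpow_of_exponent_ge hpos (by linarith [rpow_nonneg ht.1 w]) hp

lemma integral_inv_one_sub {y : ℝ} (hy : y < 1) :
    ∫ t in (0:ℝ)..y, (1 - t)⁻¹ = -log (1 - y) := by
  rw [intervalIntegral.integral_comp_sub_left (fun x => x⁻¹), sub_zero,
    integral_inv_of_pos (sub_pos.2 hy) one_pos, one_div, log_inv]

lemma tendsto_neg_log_one_sub_nhdsLT_one : Tendsto (fun y => -log (1 - y)) (𝓝[<] 1) atTop := by
  have h : Tendsto (fun y : ℝ => 1 - y) (𝓝[<] 1) (𝓝[>] 0) :=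
    tendsto_nhdsWithin_iff.2 ⟨((continuous_sub_left (1:ℝ)).tendsto' 1 0 (sub_self 1)).mono_left
      nhdsWithin_le_nhds, eventually_nhdsWithin_of_forall fun _ hy => mem_Ioi.2 (sub_pos.2 hy)⟩
  exact tendsto_neg_atBot_atTop.comp (tendsto_log_nhdsGT_zero.comp h)

lemma tendsto_integral_one_sub_rpow_rpow_atTop {w p : ℝ} (hw : 0 < w) (hp : p ≤ -1) :
    Tendsto (fun y => ∫ t in (0:ℝ)..y, (1 - t ^ w) ^ p) (𝓝[<] 1) atTop := by
  have hC : 0 < max w 1 := lt_max_of_lt_right one_pos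
  refine tendsto_atTop_mono' _ ?_
    (tendsto_neg_log_one_sub_nhdsLT_one.const_mul_atTop (inv_pos.2 hC))
  filter_upwards [Ioo_mem_nhdsLT zero_lt_one] with y hy
  have hsub : uIcc 0 y ⊆ Ico 0 1 := (uIcc_of_le hy.1.le).symm ▸ Icc_subset_Ico_right hy.2
  have hlower : IntervalIntegrable (fun t : ℝ => (max w 1 * (1 - t))⁻¹) volume 0 y :=
    ContinuousOn.intervalIntegrable <| (continuousOn_const.mul (continuousOn_const.sub
      continuousOn_id)).inv₀ fun t ht => (mul_pos hC (sub_pos.2 (hsub ht).2)).ne'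
  calc (max w 1)⁻¹ * -log (1 - y) = ∫ t in (0:ℝ)..y, (max w 1 * (1 - t))⁻¹ := by
        simp only [mul_inv, intervalIntegral.integral_const_mul, integral_inv_one_sub hy.2]
    _ ≤ ∫ t in (0:ℝ)..y, (1 - t ^ w) ^ p :=
        intervalIntegral.integral_mono_on hy.1.le hlower
          ((continuousOn_one_sub_rpow_rpow p hw).mono hsub).intervalIntegrable fun t ht =>
          inv_max_mul_one_sub_le_one_sub_rpow_rpow hw hp (hsub (uIcc_of_le hy.1.le ▸ ht))

theorem stmt0_general (v w : ℝ) (hw : 0 < w) :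
    (v ∉ Set.Icc (0:ℝ) 1 →
      Tendsto (fun y : ℝ => ∫ t in (0:ℝ)..y, (1 - t ^ w) ^ (-1 / v))
        (nhdsWithin 1 (Set.Iio 1)) (nhds (1 / w * realBeta (1 - 1 / v) (1 / w)))) ∧
    (v ∈ Set.Ioc (0:ℝ) 1 →
      Tendsto (fun y : ℝ => ∫ t in (0:ℝ)..y, (1 - t ^ w) ^ (-1 / v))
        (nhdsWithin 1 (Set.Iio 1)) atTop) := by
  refine ⟨fun hv => ?_, fun ⟨hv0, hv1⟩ => ?_⟩
  · have hp : -1 < -1 / v := by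
      rw [neg_div, neg_lt_neg_iff]
      rcases le_or_gt v 0 with hv0 | hv0
      · linarith [one_div_nonpos.2 hv0]
      · exact (div_lt_one hv0).2 (lt_of_not_ge fun hv1 => hv ⟨hv0.le, hv1⟩)
    have := tendsto_integral_nhdsLT_of_intervalIntegrable one_pos
      (intervalIntegrable_one_sub_rpow_rpow hw hp)
    rwa [integral_one_sub_rpow_rpow hw hp, show -1 / v + 1 = 1 - 1 / v by ring] at this
  · refine tendsto_integral_one_sub_rpow_rpow_atTop hw ?_
    rw [neg_div, neg_le_neg_iff]
    exact one_le_one_div hv0 hv1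

/-- For `v ≠ 0` and `w > 0`, the limit as `y → 1⁻` of
`∫₀^y (1 - t^w)^(-1/v) dt` equals `(1/w)·B(1 - 1/v, 1/w)` when `v ∉ [0,1]`,
and equals `+∞` when `v ∈ (0,1]`. -/
theorem stmt0 (v w : ℝ) (hv : v ≠ 0) (hw : 0 < w) :
    (v ∉ Set.Icc (0:ℝ) 1 →
      Tendsto (fun y : ℝ => ∫ t in (0:ℝ)..y, (1 - t ^ w) ^ (-1 / v))
        (nhdsWithin 1 (Set.Iio 1)) (nhds (1 / w * realBeta (1 - 1 / v) (1 / w)))) ∧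
    (v ∈ Set.Ioc (0:ℝ) 1 →
      Tendsto (fun y : ℝ => ∫ t in (0:ℝ)..y, (1 - t ^ w) ^ (-1 / v))
        (nhdsWithin 1 (Set.Iio 1)) atTop) :=
  stmt0_general v w hw
end

section
/- Let v ∈ ℝ\{0}, w > 0, and let sin_{v,w} be the inverse function of arcsin_{v,w}(y) = ∫₀^y (1-|t|^w)^{-1/v} dt on (-π_{v,w}/2, π_{v,w}/2), and define cos_{v,w}(x) = d/dx sin_{v,w}(x). Then for all x in the domain, |cos_{v,w}(x)|^v + |sin_{v,w}(x)|^w = 1. -/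
open MeasureTheory Set

/-- Pythagorean-type identity for the generalized trigonometric functions:
if `s` is the inverse of `arcsin_{v,w}(y) = ∫₀^y (1-|t|^w)^(-1/v) dt` on an open
set `D` (i.e. `arcsin_{v,w} (s x) = x` with `s x ∈ (-1,1)`) and `c` is its
derivative, then `|c x|^v + |s x|^w = 1` on `D`. -/
theorem stmt1 (v w : ℝ) (hv : v ≠ 0) (hw : 0 < w)
    (D : Set ℝ) (hD : IsOpen D) (s c : ℝ → ℝ)
    (hrange : ∀ x ∈ D, s x ∈ Set.Ioo (-1 : ℝ) 1)
    (hinv : ∀ x ∈ D, (∫ t in (0:ℝ)..(s x), (1 - |t| ^ w) ^ (-1 / v)) = x)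
    (hderiv : ∀ x ∈ D, HasDerivAt s (c x) x) :
    ∀ x ∈ D, |c x| ^ v + |s x| ^ w = 1 := by
  intro x hx
  set f : ℝ → ℝ := fun t => (1 - |t| ^ w) ^ (-1 / v) with hf
  have hbase : ∀ t ∈ Set.Ioo (-1 : ℝ) 1, 0 < 1 - |t| ^ w := by
    intro t ht
    have habs : |t| < 1 := abs_lt.mpr ⟨ht.1, ht.2⟩
    have h2 : |t| ^ w < 1 ^ w := by
      rcases eq_or_lt_of_le (abs_nonneg t) with h | h
      · rw [← h, Real.zero_rpow hw.ne', Real.one_rpow]; norm_num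
      · exact Real.rpow_lt_rpow (abs_nonneg t) habs hw
    rw [Real.one_rpow] at h2
    linarith
  have hcont : ContinuousOn f (Set.Ioo (-1 : ℝ) 1) := by
    intro t ht
    apply ContinuousAt.continuousWithinAt
    have h1 : ContinuousAt (fun t : ℝ => 1 - |t| ^ w) t :=
      continuousAt_const.sub (continuous_abs.continuousAt.rpow_const (Or.inr hw.le))
    exact h1.rpow_const (Or.inl (hbase t ht).ne')
  have hsx := hrange x hx
  have h0 : (0:ℝ) ∈ Set.Ioo (-1:ℝ) 1 := by norm_num
  have hsub : Set.uIcc (0 : ℝ) (s x) ⊆ Set.Ioo (-1 : ℝ) 1 :=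
    Set.ordConnected_Ioo.uIcc_subset h0 hsx
  have hFderiv : HasDerivAt (fun u => ∫ t in (0:ℝ)..u, f t) (f (s x)) (s x) := by
    apply intervalIntegral.integral_hasDerivAt_right
    · exact (hcont.mono hsub).intervalIntegrable
    · exact hcont.stronglyMeasurableAtFilter isOpen_Ioo (s x) hsx
    · exact (hcont (s x) hsx).continuousAt (isOpen_Ioo.mem_nhds hsx)
  have hchain : HasDerivAt (fun y => ∫ t in (0:ℝ)..(s y), f t) (f (s x) * c x) x :=
    hFderiv.comp x (hderiv x hx)
  have heq : (fun y => ∫ t in (0:ℝ)..(s y), f t) =ᶠ[nhds x] id := by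
    filter_upwards [hD.mem_nhds hx] with y hy using hinv y hy
  have hid : HasDerivAt (fun y => ∫ t in (0:ℝ)..(s y), f t) 1 x :=
    (hasDerivAt_id x).congr_of_eventuallyEq heq
  have hkey : f (s x) * c x = 1 := hchain.unique hid
  have hb : 0 < 1 - |s x| ^ w := hbase (s x) hsx
  have hfsx : f (s x) = (1 - |s x| ^ w) ^ (-1 / v) := rfl
  have hfpos : 0 < f (s x) := Real.rpow_pos_of_pos hb _
  have hc : c x = (1 - |s x| ^ w) ^ (1 / v) := by
    have h2 : c x = (f (s x))⁻¹ := by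
      field_simp
      linarith [hkey]
    rw [h2, hfsx, ← Real.rpow_neg hb.le, neg_div, neg_neg]
  have hcpos : 0 < c x := by rw [hc]; exact Real.rpow_pos_of_pos hb _
  rw [abs_of_pos hcpos, hc, ← Real.rpow_mul hb.le, one_div_mul_cancel hv,
    Real.rpow_one]
  ring
end

section
/- Let v ∈ ℝ\{0}, w > 0, and let sinh_{v,w} be the inverse function of arsinh_{v,w}(y) = ∫₀^y (1+|t|^w)^{-1/v} dt, and define cosh_{v,w}(x) = d/dx sinh_{v,w}(x). Then for all x in the domain, (cosh_{v,w}(x))^v - |sinh_{v,w}(x)|^w = 1. -/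
open MeasureTheory Set

/-- Pythagorean-type identity for the generalized hyperbolic functions:
if `s` is the inverse of `arsinh_{v,w}(y) = ∫₀^y (1+|t|^w)^(-1/v) dt` on an open
set `D` (i.e. `arsinh_{v,w} (s x) = x`) and `c` is its derivative, then
`(c x)^v - |s x|^w = 1` on `D`. -/
theorem stmt2 (v w : ℝ) (hv : v ≠ 0) (hw : 0 < w)
    (D : Set ℝ) (hD : IsOpen D) (s c : ℝ → ℝ)
    (hinv : ∀ x ∈ D, (∫ t in (0:ℝ)..(s x), (1 + |t| ^ w) ^ (-1 / v)) = x)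
    (hderiv : ∀ x ∈ D, HasDerivAt s (c x) x) :
    ∀ x ∈ D, c x ^ v - |s x| ^ w = 1 := by
  intro x hx
  set g : ℝ → ℝ := fun t => (1 + |t| ^ w) ^ (-1 / v) with hg
  have hpos : ∀ t : ℝ, 0 < 1 + |t| ^ w := fun t => by positivity
  have hgcont : Continuous g := by
    apply Continuous.rpow_const
    · exact continuous_const.add (continuous_abs.rpow_const (fun t => Or.inr hw.le))
    · intro t; exact Or.inl (hpos t).ne'
  set f : ℝ → ℝ := fun y => ∫ t in (0:ℝ)..y, g t with hf
  have hfderiv : ∀ y : ℝ, HasDerivAt f (g y) y := by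
    intro y
    exact intervalIntegral.integral_hasDerivAt_right
      (hgcont.intervalIntegrable _ _)
      (hgcont.stronglyMeasurableAtFilter _ _)
      hgcont.continuousAt
  have h1 : HasDerivAt (fun y => f (s y)) (g (s x) * c x) x :=
    (hfderiv (s x)).comp x (hderiv x hx)
  have h2 : HasDerivAt (fun y => f (s y)) 1 x := by
    have heq : (fun y => f (s y)) =ᶠ[nhds x] id := by
      filter_upwards [hD.mem_nhds hx] with y hy
      exact hinv y hy
    exact (hasDerivAt_id x).congr_of_eventuallyEq heq
  have hkey : g (s x) * c x = 1 := h1.unique h2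
  have hb : (0:ℝ) < 1 + |s x| ^ w := hpos (s x)
  have hcx : c x = (1 + |s x| ^ w) ^ (1 / v) := by
    have hgne : g (s x) ≠ 0 := by
      simp only [hg]
      exact (Real.rpow_pos_of_pos hb _).ne'
    have : c x = (g (s x))⁻¹ := by
      field_simp at hkey ⊢
      linarith [hkey]
    rw [this]
    simp only [hg, neg_div]
    rw [Real.rpow_neg hb.le, inv_inv]
  rw [hcx, ← Real.rpow_mul hb.le, one_div, inv_mul_cancel₀ hv, Real.rpow_one]
  ring
end

section
/- The function u(x) = sin_{v,w}(x) satisfies the initial value problem (|u'|^{v-2} u')' + ((v-1)w/v)·|u|^{w-2}·u = 0 with u(0)=0, u'(0)=1, on a neighborhood of 0, for v > 1 and w > 1. -/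
/-! Differentiating `arcsin_{v,w} (u x) = x` gives `u' = (1 - |u|^w)^(1/v)`, which is positive,
so `|u'|^(v-2) u' = (1 - |u|^w)^((v-1)/v)`; the chain rule then produces
`-((v-1)w/v) |u|^(w-2) u` times `u' (1 - |u|^w)^(-1/v) = 1`. The initial values follow from
`arcsin_{v,w}` being strictly increasing on `(-1, 1)` with `arcsin_{v,w} 0 = 0`. -/

open MeasureTheory Set

/-- `s` is the generalized sine `sin_{v,w}` on the open set `D` (the inverse of
`arcsin_{v,w}(y) = ∫₀^y (1-|t|^w)^(-1/v) dt`) and `c = sin_{v,w}' = cos_{v,w}`. -/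
def IsGenSin (v w : ℝ) (D : Set ℝ) (s c : ℝ → ℝ) : Prop :=
  IsOpen D ∧ (∀ x ∈ D, s x ∈ Set.Ioo (-1 : ℝ) 1) ∧
    (∀ x ∈ D, (∫ t in (0:ℝ)..(s x), (1 - |t| ^ w) ^ (-1 / v)) = x) ∧
    (∀ x ∈ D, HasDerivAt s (c x) x)

open Filter Topology

noncomputable def genArcsin (v w y : ℝ) : ℝ :=
  ∫ t in (0 : ℝ)..y, (1 - |t| ^ w) ^ (-1 / v)

section GenArcsin

variable {v w : ℝ}

lemma one_sub_abs_rpow_pos (hw : 0 < w) {y : ℝ} (hy : y ∈ Ioo (-1 : ℝ) 1) :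
    0 < 1 - |y| ^ w := by
  have : |y| ^ w < 1 := Real.rpow_lt_one (abs_nonneg y) (abs_lt.2 hy) hw
  linarith

lemma continuousOn_one_sub_abs_rpow_rpow (hw : 0 < w) (p : ℝ) :
    ContinuousOn (fun t : ℝ => (1 - |t| ^ w) ^ p) (Ioo (-1) 1) := fun _ hy =>
  ((continuousAt_const.sub ((Real.continuousAt_rpow_const _ _ (Or.inr hw.le)).comp
    continuous_abs.continuousAt)).rpow_const
      (Or.inl (one_sub_abs_rpow_pos hw hy).ne')).continuousWithinAt

lemma hasDerivAt_genArcsin (hw : 0 < w) {y : ℝ} (hy : y ∈ Ioo (-1 : ℝ) 1) :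
    HasDerivAt (genArcsin v w) ((1 - |y| ^ w) ^ (-1 / v)) y := by
  have hcont := continuousOn_one_sub_abs_rpow_rpow hw (-1 / v)
  refine intervalIntegral.integral_hasDerivAt_right ?_
    (hcont.stronglyMeasurableAtFilter isOpen_Ioo y hy) (hcont.continuousAt (isOpen_Ioo.mem_nhds hy))
  exact (hcont.mono (ordConnected_Ioo.uIcc_subset (by norm_num) hy)).intervalIntegrable

lemma strictMonoOn_genArcsin (hw : 0 < w) : StrictMonoOn (genArcsin v w) (Ioo (-1) 1) := by
  refine strictMonoOn_of_hasDerivWithinAt_pos (convex_Ioo _ _)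
    (fun y hy => (hasDerivAt_genArcsin hw hy).continuousAt.continuousWithinAt)
    (fun y hy => (hasDerivAt_genArcsin hw (interior_subset hy)).hasDerivWithinAt) fun y hy => ?_
  exact Real.rpow_pos_of_pos (one_sub_abs_rpow_pos hw (interior_subset hy)) _

lemma abs_rpow_one_div_rpow_mul {A : ℝ} (hv : v ≠ 0) (hA : 0 < A) :
    |A ^ (1 / v)| ^ (v - 2) * A ^ (1 / v) = A ^ ((v - 1) / v) := by
  rw [abs_of_pos (Real.rpow_pos_of_pos hA _), ← Real.rpow_mul hA.le, ← Real.rpow_add hA]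
  congr 1
  field_simp
  ring

end GenArcsin

namespace IsGenSin

variable {v w : ℝ} {D : Set ℝ} {s c : ℝ → ℝ} {x : ℝ}

lemma genArcsin_eq (h : IsGenSin v w D s c) (hx : x ∈ D) : genArcsin v w (s x) = x :=
  h.2.2.1 x hx

lemma sin_zero (hw : 0 < w) (h : IsGenSin v w D s c) (h0 : 0 ∈ D) : s 0 = 0 := by
  refine (strictMonoOn_genArcsin (v := v) hw).injOn (h.2.1 0 h0) ⟨by norm_num, by norm_num⟩ ?_
  rw [h.genArcsin_eq h0, genArcsin, intervalIntegral.integral_same]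

lemma rpow_mul_cos_eq_one (hw : 0 < w) (h : IsGenSin v w D s c) (hx : x ∈ D) :
    (1 - |s x| ^ w) ^ (-1 / v) * c x = 1 := by
  have hcomp := (hasDerivAt_genArcsin (v := v) hw (h.2.1 x hx)).comp x (h.2.2.2 x hx)
  have hid : (fun t => t) =ᶠ[𝓝 x] genArcsin v w ∘ s := by
    filter_upwards [h.1.mem_nhds hx] with t ht
    exact (h.genArcsin_eq ht).symm
  exact (hcomp.congr_of_eventuallyEq hid).unique (hasDerivAt_id' x)

lemma cos_eq_rpow (hw : 0 < w) (h : IsGenSin v w D s c) (hx : x ∈ D) :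
    c x = (1 - |s x| ^ w) ^ (1 / v) := by
  rw [eq_inv_of_mul_eq_one_right (h.rpow_mul_cos_eq_one hw hx), neg_div,
    Real.rpow_neg (one_sub_abs_rpow_pos hw (h.2.1 x hx)).le, inv_inv]

lemma cos_zero (hw : 0 < w) (h : IsGenSin v w D s c) (h0 : 0 ∈ D) : c 0 = 1 := by
  rw [h.cos_eq_rpow hw h0, h.sin_zero hw h0, abs_zero, Real.zero_rpow hw.ne', sub_zero,
    Real.one_rpow]

lemma hasDerivAt_abs_cos_rpow_mul_cos (hv : v ≠ 0) (hw : 1 < w) (h : IsGenSin v w D s c)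
    (hx : x ∈ D) :
    HasDerivAt (fun t => |c t| ^ (v - 2) * c t)
      (-((v - 1) * w / v * (|s x| ^ (w - 2) * s x))) x := by
  have hw0 : 0 < w := by linarith
  have hA := one_sub_abs_rpow_pos hw0 (h.2.1 x hx)
  have hflux : (fun t => |c t| ^ (v - 2) * c t) =ᶠ[𝓝 x]
      fun t => (1 - |s t| ^ w) ^ ((v - 1) / v) := by
    filter_upwards [h.1.mem_nhds hx] with t ht
    rw [h.cos_eq_rpow hw0 ht,
      abs_rpow_one_div_rpow_mul hv (one_sub_abs_rpow_pos hw0 (h.2.1 t ht))]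
  have hbase : HasDerivAt (fun t => 1 - |s t| ^ w) (-(w * |s x| ^ (w - 2) * s x * c x)) x := by
    simpa using (hasDerivAt_abs_rpow (s x) hw).comp x (h.2.2.2 x hx) |>.const_sub 1
  have hcancel : (1 - |s x| ^ w) ^ (1 / v) * (1 - |s x| ^ w) ^ ((v - 1) / v - 1) = 1 := by
    rw [← Real.rpow_add hA, show 1 / v + ((v - 1) / v - 1) = 0 by field_simp; ring,
      Real.rpow_zero]
  refine ((hbase.rpow_const (Or.inl hA.ne')).congr_of_eventuallyEq hflux).congr_deriv ?_
  rw [h.cos_eq_rpow hw0 hx]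
  linear_combination (-((v - 1) / v * w * (|s x| ^ (w - 2) * s x))) * hcancel

end IsGenSin

/-- For `v > 1` and `w > 1`, `u = sin_{v,w}` solves the initial value problem
`(|u'|^(v-2) u')' + ((v-1)w/v)·|u|^(w-2)·u = 0`, `u(0) = 0`, `u'(0) = 1`,
on a neighborhood of `0`. -/
theorem stmt5 (v w : ℝ) (hv : 1 < v) (hw : 1 < w)
    (D : Set ℝ) (s c : ℝ → ℝ) (h : IsGenSin v w D s c) (h0 : 0 ∈ D) :
    s 0 = 0 ∧ c 0 = 1 ∧ ∃ ε > (0:ℝ), ∀ x : ℝ, |x| < ε →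
      deriv (fun t => |c t| ^ (v - 2) * c t) x
        + (v - 1) * w / v * (|s x| ^ (w - 2) * s x) = 0 := by
  have hw0 : 0 < w := by linarith
  refine ⟨h.sin_zero hw0 h0, h.cos_zero hw0 h0, ?_⟩
  obtain ⟨ε, hε, hball⟩ := Metric.isOpen_iff.1 h.1 0 h0
  refine ⟨ε, hε, fun x hx => ?_⟩
  have hxD : x ∈ D := hball (by rwa [Metric.mem_ball, dist_zero_right, Real.norm_eq_abs])
  rw [(h.hasDerivAt_abs_cos_rpow_mul_cos (by linarith) hw hxD).deriv]
  ring
end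

section
/- For a probability density f, α ∈ ℝ, and κ > 0, letting f_{(κ)}(x) = κ f(κx), one has E_α(f_{(κ)}) = (E_α f)_{(κ^α)}, i.e., the differential-escort transform of the κ-scaled density equals the κ^α-scaled differential-escort transform of f. -/
open MeasureTheory Set

/-- The stretching map `y(x) = ∫₀^x f(t)^(1-α) dt` of the differential-escort
transformation. -/
noncomputable def yMap (α : ℝ) (f : ℝ → ℝ) (x : ℝ) : ℝ :=
  ∫ t in (0:ℝ)..x, f t ^ (1 - α)

/-- The differential-escort transform `(E_α f)(y) = f(x(y))^α`. -/
noncomputable def descort (α : ℝ) (f : ℝ → ℝ) : ℝ → ℝ :=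
  fun y => f (Function.invFun (yMap α f) y) ^ α

lemma yMap_scaled (α : ℝ) (f : ℝ → ℝ) (hf : ∀ x, 0 ≤ f x) (κ : ℝ) (hκ : 0 < κ) (x : ℝ) :
    yMap α (fun x => κ * f (κ * x)) x = κ ^ (-α) * yMap α f (κ * x) := by
  unfold yMap
  simp_rw [Real.mul_rpow hκ.le (hf _)]
  rw [intervalIntegral.integral_const_mul,
    intervalIntegral.integral_comp_mul_left (fun s => f s ^ (1 - α)) hκ.ne',
    mul_zero, smul_eq_mul, ← mul_assoc]
  congr 1
  rw [← Real.rpow_neg_one κ, ← Real.rpow_add hκ]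
  ring_nf

/-- Scaling property: `E_α (f_{(κ)}) = (E_α f)_{(κ^α)}`, where `f_{(κ)}(x) = κ f(κx)`. -/
theorem stmt9 (f : ℝ → ℝ) (hf : ∀ x, 0 ≤ f x) (hc : Continuous f)
    (hint : ∫ x, f x = 1) (α κ : ℝ) (hκ : 0 < κ)
    (h1 : Function.Bijective (yMap α f)) :
    descort α (fun x => κ * f (κ * x)) = fun y => κ ^ α * descort α f (κ ^ α * y) := by
  have hκα : (0:ℝ) < κ ^ α := Real.rpow_pos_of_pos hκ α
  have hκnα : (0:ℝ) < κ ^ (-α) := Real.rpow_pos_of_pos hκ (-α)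
  set g : ℝ → ℝ := fun x => κ * f (κ * x) with hg
  have hyg : yMap α g = fun x => κ ^ (-α) * yMap α f (κ * x) :=
    funext (yMap_scaled α f hf κ hκ)
  -- bijectivity of yMap α g
  have hmul : ∀ c : ℝ, c ≠ 0 → Function.Bijective (fun x : ℝ => c * x) := by
    intro c hc0
    exact (Equiv.mulLeft₀ c hc0).bijective
  have hbg : Function.Bijective (yMap α g) := by
    rw [hyg]
    exact (hmul _ hκnα.ne').comp (h1.comp (hmul _ hκ.ne'))
  funext y
  set X := Function.invFun (yMap α f) (κ ^ α * y) with hX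
  have hfX : yMap α f X = κ ^ α * y := Function.rightInverse_invFun h1.surjective _
  have hinv : Function.invFun (yMap α g) y = κ⁻¹ * X := by
    apply hbg.injective
    rw [Function.rightInverse_invFun hbg.surjective y, hyg]
    simp only
    rw [mul_inv_cancel_left₀ hκ.ne', hfX, ← mul_assoc, ← Real.rpow_add hκ]
    simp
  show g (Function.invFun (yMap α g) y) ^ α = κ ^ α * descort α f (κ ^ α * y)
  rw [hinv, hg]
  simp only
  rw [mul_inv_cancel_left₀ hκ.ne', Real.mul_rpow hκ.le (hf _)]
  rfl
end

section
/- For a probability density f, p > 0, λ > 1/(1+p*), and α > 0, the quantity φ_{p,λ}[f] = F_{p,λ}[f]^{1/(pλ)} satisfies φ_{p,λ}[E_α f] = α^{1/λ} (φ_{p,αλ}[f])^α. -/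
open MeasureTheory Set
open scoped ENNReal NNReal

/-- The `(p,l)`-Fisher information `F_{p,l}[f] = ∫ |f^(l-2) f'|^p f`. -/
noncomputable def fisherInfo (p l : ℝ) (f : ℝ → ℝ) : ℝ :=
  ∫ x, |f x ^ (l - 2) * deriv f x| ^ p * f x

/-- `φ_{p,l}[f] = F_{p,l}[f]^(1/(p l))`. -/
noncomputable def phiFisher (p l : ℝ) (f : ℝ → ℝ) : ℝ :=
  fisherInfo p l f ^ (1 / (p * l))

/-- Stretching effect on the `(p,l)`-Fisher information:
`φ_{p,l}[E_α f] = α^(1/l) (φ_{p,αl}[f])^α` for `p > 0`, `l > 1/(1+p*)`, `α > 0`. -/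
theorem stmt11 (f : ℝ → ℝ) (hf : ∀ x, 0 ≤ f x) (hd : Differentiable ℝ f)
    (hint : ∫ x, f x = 1) (p l α : ℝ) (hp : 0 < p)
    (hl : 1 / (1 + p / (p - 1)) < l) (hα : 0 < α)
    (h1 : Function.Bijective (yMap α f)) :
    phiFisher p l (descort α f) = α ^ (1 / l) * phiFisher p (α * l) f ^ α := by
  classical
  set Y : ℝ → ℝ := yMap α f with hYdef
  set ρ : ℝ → ℝ := fun t => f t ^ (1 - α) with hρdef
  have hfc : Continuous f := hd.continuous
  have hρ0 : ∀ t, 0 ≤ ρ t := fun t => Real.rpow_nonneg (hf t) _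
  have hρm : Measurable ρ := hfc.measurable.pow measurable_const
  have hY0 : Y 0 = 0 := intervalIntegral.integral_same
  -- interval integrability of the density of the stretching map
  have hii : ∀ x, IntervalIntegrable ρ volume 0 x := by
    intro x
    by_contra h
    have hx0 : Y x = 0 := intervalIntegral.integral_undef h
    have : x = 0 := h1.injective (hx0.trans hY0.symm)
    subst this
    exact h (IntervalIntegrable.refl)
  have hiiab : ∀ a b : ℝ, IntervalIntegrable ρ volume a b := fun a b =>
    (hii a).symm.trans (hii b)
  have hYab : ∀ a b : ℝ, Y a + ∫ t in a..b, ρ t = Y b := fun a b =>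
    intervalIntegral.integral_add_adjacent_intervals (hii a) (hiiab a b)
  have hmono : Monotone Y := by
    intro a b hab
    have h0 : 0 ≤ ∫ t in a..b, ρ t :=
      intervalIntegral.integral_nonneg hab fun u _ => hρ0 u
    have := hYab a b
    linarith
  have hsm : StrictMono Y := hmono.strictMono_of_injective h1.injective
  let e : ℝ ≃o ℝ := StrictMono.orderIsoOfSurjective Y hsm h1.surjective
  have hec : ⇑e = Y := StrictMono.coe_orderIsoOfSurjective Y hsm h1.surjective
  have heY : ∀ x, e x = Y x := fun x => congrFun hec x
  have hesymm : ∀ y, e.symm y = Function.invFun Y y := by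
    intro y
    apply h1.injective
    have h2 : Y (e.symm y) = y := by rw [← heY]; exact e.apply_symm_apply y
    rw [h2, Function.rightInverse_invFun h1.surjective y]
  have hYc : Continuous Y := by rw [← hec]; exact (OrderIso.toHomeomorph e).continuous
  have hYm : Measurable Y := hYc.measurable
  have hinvc : Continuous (Function.invFun Y) := by
    have : Function.invFun Y = ⇑(OrderIso.toHomeomorph e).symm := by
      funext y
      rw [OrderIso.coe_toHomeomorph_symm]
      exact (hesymm y).symm
    rw [this]
    exact (OrderIso.toHomeomorph e).symm.continuous
  have hemb : MeasurableEmbedding Y := by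
    rw [← hec, ← OrderIso.coe_toHomeomorph]
    exact (OrderIso.toHomeomorph e).measurableEmbedding
  have hinvY : ∀ x, Function.invFun Y (Y x) = x :=
    fun x => Function.leftInverse_invFun h1.injective x
  -- the pushforward of `ρ · volume` under `Y` is the Lebesgue measure
  set μ : Measure ℝ := volume.withDensity fun x => ((ρ x).toNNReal : ℝ≥0∞) with hμdef
  have hkey : ∀ a b : ℝ, a < b → (Measure.map Y μ) (Ioc a b) = ENNReal.ofReal (b - a) := by
    intro a b hab
    have hpre : Y ⁻¹' Ioc a b = Ioc (e.symm a) (e.symm b) := by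
      rw [← hec]; exact e.preimage_Ioc a b
    have huv : e.symm a ≤ e.symm b := e.symm.monotone hab.le
    have hYu : Y (e.symm a) = a := by rw [← heY]; exact e.apply_symm_apply a
    have hYv : Y (e.symm b) = b := by rw [← heY]; exact e.apply_symm_apply b
    have hIO : IntegrableOn ρ (Ioc (e.symm a) (e.symm b)) volume :=
      (hiiab (e.symm a) (e.symm b)).1
    have hval : (∫ x in Ioc (e.symm a) (e.symm b), ρ x) = b - a := by
      rw [← intervalIntegral.integral_of_le huv]
      have := hYab (e.symm a) (e.symm b)
      rw [hYu, hYv] at this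
      linarith
    rw [Measure.map_apply hYm measurableSet_Ioc, hpre, hμdef,
      withDensity_apply _ measurableSet_Ioc]
    have : (∫⁻ x in Ioc (e.symm a) (e.symm b), ((ρ x).toNNReal : ℝ≥0∞)) =
        ∫⁻ x in Ioc (e.symm a) (e.symm b), ENNReal.ofReal (ρ x) := by
      rfl
    rw [this, ← ofReal_integral_eq_lintegral_ofReal hIO
      (Filter.Eventually.of_forall hρ0), hval]
  have hmap : Measure.map Y μ = volume := by
    refine Measure.ext_of_Ioc' (Measure.map Y μ) volume ?_ ?_
    · intro a b hab
      rw [hkey a b hab]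
      exact ENNReal.ofReal_ne_top
    · intro a b hab
      rw [hkey a b hab, Real.volume_Ioc]
  -- value of the escort transform along `Y`
  have hgval : ∀ x, descort α f (Y x) = f x ^ α := by
    intro x
    show f (Function.invFun (yMap α f) (Y x)) ^ α = f x ^ α
    rw [← hYdef, hinvY x]
  -- derivative of the escort transform along `Y` at points of positivity
  have hder : ∀ x, 0 < f x →
      deriv (descort α f) (Y x) = deriv f x * (ρ x)⁻¹ * α * f x ^ (α - 1) := by
    intro x hx
    have hρx : 0 < ρ x := Real.rpow_pos_of_pos hx _
    have hρcont : ContinuousAt ρ x :=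
      hfc.continuousAt.rpow_const (Or.inl hx.ne')
    have hYd : HasDerivAt Y (ρ x) x :=
      intervalIntegral.integral_hasDerivAt_right (hii x)
        ⟨univ, Filter.univ_mem, hρm.aestronglyMeasurable⟩ hρcont
    have hinvd : HasDerivAt (Function.invFun Y) (ρ x)⁻¹ (Y x) := by
      refine HasDerivAt.of_local_left_inverse (f := Y) hinvc.continuousAt ?_ hρx.ne' ?_
      · rw [hinvY x]; exact hYd
      · exact Filter.Eventually.of_forall (Function.rightInverse_invFun h1.surjective)
    have hfd : HasDerivAt f (deriv f x) (Function.invFun Y (Y x)) := by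
      rw [hinvY x]; exact (hd x).hasDerivAt
    have hcomp : HasDerivAt (fun y => f (Function.invFun Y y))
        (deriv f x * (ρ x)⁻¹) (Y x) := hfd.comp (Y x) hinvd
    have hne : f (Function.invFun Y (Y x)) ≠ 0 := by rw [hinvY x]; exact hx.ne'
    have hr : HasDerivAt (fun y => f (Function.invFun Y y) ^ α)
        (deriv f x * (ρ x)⁻¹ * α * f (Function.invFun Y (Y x)) ^ (α - 1)) (Y x) :=
      hcomp.rpow_const (Or.inl hne)
    rw [hinvY x] at hr
    exact (show HasDerivAt (descort α f) _ (Y x) from hr).deriv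
  -- pointwise identity of integrands
  have hpt : ∀ x, ((ρ x).toNNReal : ℝ≥0) •
      (|descort α f (Y x) ^ (l - 2) * deriv (descort α f) (Y x)| ^ p * descort α f (Y x)) =
      α ^ p * (|f x ^ (α * l - 2) * deriv f x| ^ p * f x) := by
    intro x
    rw [NNReal.smul_def, Real.coe_toNNReal _ (hρ0 x), hgval x]
    rcases eq_or_lt_of_le (hf x) with hx | hx
    · rw [← hx, Real.zero_rpow hα.ne']
      simp
    · rw [hder x hx]
      have hc := hx.le
      have e1 : (f x ^ α) ^ (l - 2) = f x ^ (α * (l - 2)) :=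
        (Real.rpow_mul hc α (l - 2)).symm
      have e2 : (ρ x)⁻¹ = f x ^ (α - 1) := by
        rw [hρdef]
        rw [← Real.rpow_neg hc]
        norm_num
      have harg : f x ^ (α * (l - 2)) *
          (deriv f x * f x ^ (α - 1) * α * f x ^ (α - 1)) =
          α * (f x ^ (α * l - 2) * deriv f x) := by
        rw [show α * l - 2 = α * (l - 2) + (α - 1) + (α - 1) by ring,
          Real.rpow_add hx, Real.rpow_add hx]
        ring
      rw [e1, e2, harg, abs_mul, Real.mul_rpow (abs_nonneg _) (abs_nonneg _),
        abs_of_pos hα]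
      have e3 : ρ x * (f x ^ α) = f x := by
        rw [hρdef, ← Real.rpow_add hx]
        norm_num
      calc ρ x * (α ^ p * |f x ^ (α * l - 2) * deriv f x| ^ p * (f x ^ α))
          = α ^ p * (|f x ^ (α * l - 2) * deriv f x| ^ p * (ρ x * f x ^ α)) := by ring
        _ = α ^ p * (|f x ^ (α * l - 2) * deriv f x| ^ p * f x) := by rw [e3]
  -- the transformation identity for the Fisher information
  have key : fisherInfo p l (descort α f) = α ^ p * fisherInfo p (α * l) f := by
    have h2 : fisherInfo p l (descort α f) = ∫ x, ((ρ x).toNNReal : ℝ≥0) •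
        (|descort α f (Y x) ^ (l - 2) * deriv (descort α f) (Y x)| ^ p *
          descort α f (Y x)) := by
      unfold fisherInfo
      conv_lhs => rw [← hmap]
      rw [hemb.integral_map, hμdef,
        integral_withDensity_eq_integral_smul (hρm.real_toNNReal)]
    rw [h2, integral_congr_ae (Filter.Eventually.of_forall hpt)]
    unfold fisherInfo
    rw [integral_const_mul]
  -- final exponent algebra
  have hF : 0 ≤ fisherInfo p (α * l) f := by
    apply integral_nonneg
    intro x
    exact mul_nonneg (Real.rpow_nonneg (abs_nonneg _) _) (hf x)
  unfold phiFisher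
  rw [key]
  rw [Real.mul_rpow (Real.rpow_nonneg hα.le p) hF]
  congr 1
  · rw [← Real.rpow_mul hα.le]
    congr 1
    rcases eq_or_ne l 0 with h | h
    · simp [h]
    · field_simp
  · rw [← Real.rpow_mul hF]
    congr 1
    rcases eq_or_ne l 0 with h | h
    · simp [h]
    · field_simp
end

section
/- For a probability density f, α ∈ ℝ and p > 0, the p-th absolute moment of the differential-escort transform equals the (p,α)-cumulative moment of f: μ_p[E_α f] = μ_{p,α}[f]; moreover for natural p the signed version holds: μ̃_p[E_α f] = μ̃_{p,α}[f]. -/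
open MeasureTheory Set

/-- If the stretching map is injective, the weighted density `f^(1-α)` is interval
integrable on every interval `[0, x]`. -/
lemma yMap_intervalIntegrable {f : ℝ → ℝ} {α : ℝ} (h1 : Function.Injective (yMap α f))
    (x : ℝ) : IntervalIntegrable (fun t => f t ^ (1 - α)) volume 0 x := by
  by_contra h
  have hx0 : x ≠ 0 := by
    rintro rfl
    exact h (IntervalIntegrable.refl)
  have hsub : uIcc (0:ℝ) x ⊆ uIcc (0:ℝ) (2 * x) := by
    apply uIcc_subset_uIcc left_mem_uIcc
    rcases le_total 0 x with hx | hx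
    · exact mem_uIcc.2 (Or.inl ⟨hx, by linarith⟩)
    · exact mem_uIcc.2 (Or.inr ⟨by linarith, hx⟩)
  have h2 : ¬ IntervalIntegrable (fun t => f t ^ (1 - α)) volume 0 (2 * x) :=
    fun h2 => h (h2.mono_set hsub)
  have e1 : yMap α f x = 0 := intervalIntegral.integral_undef h
  have e2 : yMap α f (2 * x) = 0 := intervalIntegral.integral_undef h2
  have := h1 (e1.trans e2.symm)
  apply hx0; linarith

/-- Change of variables for the differential-escort transform against an arbitrary
weight function. -/
lemma descort_integral_weight (f : ℝ → ℝ) (hf : ∀ x, 0 ≤ f x) (hc : Continuous f)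
    (α : ℝ) (h1 : Function.Bijective (yMap α f)) (w : ℝ → ℝ) :
    (∫ y, w y * descort α f y) = ∫ x, w (yMap α f x) * f x := by
  set g : ℝ → ℝ := fun t => f t ^ (1 - α) with hg
  have hii : ∀ x, IntervalIntegrable g volume 0 x := yMap_intervalIntegrable h1.1
  have hli : ∀ x, Function.invFun (yMap α f) (yMap α f x) = x :=
    Function.leftInverse_invFun h1.1
  have hprod : ∀ x, f x ^ (1 - α) * f x ^ α = f x := by
    intro x
    rcases eq_or_lt_of_le (hf x) with h0 | h0
    · rw [← h0]
      by_cases hα : α = 1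
      · simp [hα]
      · rw [Real.zero_rpow (sub_ne_zero.mpr (Ne.symm hα)), zero_mul]
    · rw [← Real.rpow_add h0, sub_add_cancel, Real.rpow_one]
  by_cases hα : α ≤ 1
  · -- the integrand `f^(1-α)` is continuous everywhere
    have hgc : Continuous g := by
      rw [continuous_iff_continuousAt]
      intro x
      exact (Real.continuousAt_rpow_const _ _ (Or.inr (by linarith))).comp hc.continuousAt
    have hderiv : ∀ x ∈ (univ : Set ℝ), HasDerivWithinAt (yMap α f) (g x) univ x := by
      intro x _
      exact (intervalIntegral.integral_hasDerivAt_right (hii x)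
        (hgc.stronglyMeasurableAtFilter _ _) hgc.continuousAt).hasDerivWithinAt
    have himg : yMap α f '' univ = univ := by
      rw [image_univ, Function.Surjective.range_eq h1.2]
    have key := integral_image_eq_integral_abs_deriv_smul MeasurableSet.univ hderiv
      (h1.1.injOn) (fun y => w y * descort α f y)
    rw [himg, setIntegral_univ, setIntegral_univ] at key
    rw [key]
    refine integral_congr_ae (Filter.Eventually.of_forall fun x => ?_)
    simp only [smul_eq_mul, descort, hli x]
    rw [abs_of_nonneg (Real.rpow_nonneg (hf x) _)]
    calc g x * (w (yMap α f x) * f x ^ α)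
        = w (yMap α f x) * (f x ^ (1 - α) * f x ^ α) := by ring
      _ = w (yMap α f x) * f x := by rw [hprod x]
  · push_neg at hα
    have hα0 : α ≠ 0 := by positivity
    set S : Set ℝ := {x | 0 < f x} with hS
    have hSopen : IsOpen S := isOpen_lt continuous_const hc
    have hSm : MeasurableSet S := hSopen.measurableSet
    have hderiv : ∀ x ∈ S, HasDerivWithinAt (yMap α f) (g x) S x := by
      intro x hx
      have hcx : ContinuousAt g x :=
        (Real.continuousAt_rpow_const _ _ (Or.inl (ne_of_gt hx))).comp hc.continuousAt
      have hmeas : ∀ x ∈ S, StronglyMeasurableAtFilter g (nhds x) volume := by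
        refine ContinuousAt.stronglyMeasurableAtFilter hSopen ?_
        intro z hz
        exact (Real.continuousAt_rpow_const _ _ (Or.inl (ne_of_gt hz))).comp hc.continuousAt
      exact (intervalIntegral.integral_hasDerivAt_right (hii x)
        (hmeas x hx) hcx).hasDerivWithinAt
    have key := integral_image_eq_integral_abs_deriv_smul hSm hderiv
      (h1.1.injOn) (fun y => w y * descort α f y)
    have hL : (∫ y, w y * descort α f y) = ∫ y in yMap α f '' S, w y * descort α f y := by
      symm
      apply setIntegral_eq_integral_of_forall_compl_eq_zero
      intro y hy
      obtain ⟨x, rfl⟩ := h1.2 y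
      have hxS : x ∉ S := fun hxS => hy ⟨x, hxS, rfl⟩
      have hfx : f x = 0 := le_antisymm (not_lt.1 hxS) (hf x)
      simp [descort, hli x, hfx, Real.zero_rpow hα0]
    have hR : (∫ x, w (yMap α f x) * f x) = ∫ x in S, w (yMap α f x) * f x := by
      symm
      apply setIntegral_eq_integral_of_forall_compl_eq_zero
      intro x hx
      have hfx : f x = 0 := le_antisymm (not_lt.1 hx) (hf x)
      simp [hfx]
    rw [hL, key, hR]
    refine setIntegral_congr_fun hSm fun x _ => ?_
    simp only [smul_eq_mul, descort, hli x]
    rw [abs_of_nonneg (Real.rpow_nonneg (hf x) _)]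
    calc g x * (w (yMap α f x) * f x ^ α)
        = w (yMap α f x) * (f x ^ (1 - α) * f x ^ α) := by ring
      _ = w (yMap α f x) * f x := by rw [hprod x]

/-- The `p`-th absolute moment of `E_α f` equals the `(p,α)`-cumulative moment of `f`:
`μ_p[E_α f] = μ_{p,α}[f]`; and for natural `n`, the signed version
`μ̃_n[E_α f] = μ̃_{n,α}[f]` also holds. -/
theorem stmt13 (f : ℝ → ℝ) (hf : ∀ x, 0 ≤ f x) (hc : Continuous f)
    (hint : ∫ x, f x = 1) (α p : ℝ) (hp : 0 < p) (n : ℕ)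
    (h1 : Function.Bijective (yMap α f)) :
    (∫ y, |y| ^ p * descort α f y) = (∫ x, |yMap α f x| ^ p * f x) ∧
    (∫ y, y ^ n * descort α f y) = (∫ x, yMap α f x ^ n * f x) := by
  exact ⟨descort_integral_weight f hf hc α h1 (fun y => |y| ^ p),
    descort_integral_weight f hf hc α h1 (fun y => y ^ n)⟩
end

section
/- The differential-escort transform of order α of the exponential density f₁(x) = e^{-x} 𝟙_{[0,∞)}(x) equals the α-scaled q-exponential density: E_α f₁ = (f_q)_{(α)} with q = 2 - 1/α, where f_q(x) ∝ exp_q(-x) 𝟙_{[0,∞)}(x) and exp_q(x) = (1 + (1-q)x)₊^{1/(1-q)}. -/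
open MeasureTheory Set

/-- The Tsallis `q`-exponential `exp_q(x) = (1 + (1-q)x)₊^(1/(1-q))` (with
`exp_1 = exp`). -/
noncomputable def expQ (q x : ℝ) : ℝ :=
  if q = 1 then Real.exp x else max (1 + (1 - q) * x) 0 ^ (1 / (1 - q))

/-- The exponential density `f₁(x) = e^{-x} 𝟙_{[0,∞)}(x)`. -/
noncomputable def expDensity : ℝ → ℝ := fun x => if 0 ≤ x then Real.exp (-x) else 0

/-- The normalized `q`-exponential density `f_q(x) = c_q exp_q(-x) 𝟙_{[0,∞)}(x)`. -/
noncomputable def qExpDensity (q : ℝ) : ℝ → ℝ :=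
  fun x => if 0 ≤ x then expQ q (-x) / (∫ s in Set.Ioi (0:ℝ), expQ q (-s)) else 0

/-!
With `q = 2 - 1/α` one has `1 - q = (1 - α)/α` and `∫₀^∞ exp_q(-s) ds = 1/(2 - q) = α`,
so `α f_q(α y) = exp_q(-α y) = (1 + (α - 1) y)₊^(α/(1-α))` for `y ≥ 0`. The escort
coordinate `y(x) = ∫₀^x e^((α-1) t) dt` satisfies `1 + (α - 1) y(x) = e^((α-1) x)`, which
turns `exp_q(-α y(x))` into `e^(-α x)`; and `y` maps `[0, ∞)` onto
`{y ≥ 0 | 1 + (α - 1) y > 0}`, off which `exp_q(-α y)` vanishes.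
-/

open Filter Topology Real

section QExponential

variable {q b : ℝ}

lemma expQ_of_ne_one (hq : q ≠ 1) (x : ℝ) :
    expQ q x = max (1 + (1 - q) * x) 0 ^ (1 / (1 - q)) :=
  if_neg hq

lemma integral_Ioi_max_one_sub_mul_rpow_of_pos (hb : 0 < b) :
    ∫ s in Ioi (0:ℝ), max (1 - b * s) 0 ^ (1 / b) = 1 / (1 + b) := by
  have hb' : 0 < 1 / b := one_div_pos.2 hb
  have hvanish : ∀ s ∈ Ioi 0 \ Ioc 0 (1 / b), max (1 - b * s) 0 ^ (1 / b) = 0 := by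
    rintro s ⟨hs0, hs⟩
    have : 1 < b * s := (div_lt_iff₀' hb).1 (lt_of_not_ge fun h => hs ⟨hs0, h⟩)
    rw [max_eq_right (by linarith), zero_rpow hb'.ne']
  have hbase : EqOn (fun s => max (1 - b * s) 0 ^ (1 / b)) (fun s => (1 - b * s) ^ (1 / b))
      (uIcc 0 (1 / b)) := by
    intro s hs
    rw [uIcc_of_le hb'.le] at hs
    have : b * s ≤ 1 := by rw [← le_div_iff₀' hb]; exact hs.2
    simp only [max_eq_left (sub_nonneg.2 this)]
  rw [setIntegral_eq_of_subset_of_forall_sdiff_eq_zero measurableSet_Ioi Ioc_subset_Ioi_self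
      hvanish, ← intervalIntegral.integral_of_le hb'.le, intervalIntegral.integral_congr hbase,
    intervalIntegral.integral_comp_sub_mul (fun u => u ^ (1 / b)) hb.ne', mul_zero, sub_zero,
    mul_one_div_cancel hb.ne', sub_self, integral_rpow (Or.inl (by linarith)), one_rpow,
    zero_rpow (by positivity), smul_eq_mul]
  field_simp
  ring

lemma integral_Ioi_max_one_sub_mul_rpow_of_neg (hb : b < 0) (hb1 : -1 < b) :
    ∫ s in Ioi (0:ℝ), max (1 - b * s) 0 ^ (1 / b) = 1 / (1 + b) := by
  have h1b : 0 < 1 + b := by linarith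
  have hpos : ∀ s : ℝ, 0 ≤ s → 0 < 1 - b * s := fun s hs => by nlinarith
  have hbase : EqOn (fun s => max (1 - b * s) 0 ^ (1 / b)) (fun s => (1 - b * s) ^ (1 / b))
      (Ioi 0) := fun s hs => by simp only [max_eq_left (hpos s (le_of_lt hs)).le]
  rw [setIntegral_congr_fun measurableSet_Ioi hbase]
  -- antiderivative `-(1 - b s)^((1+b)/b) / (1 + b)`, which tends to `0` since `(1+b)/b < 0`
  set r := (1 + b) / b with hr
  have hderiv : ∀ s ∈ Ici (0:ℝ),
      HasDerivAt (fun s => -(1 - b * s) ^ r / (1 + b)) ((1 - b * s) ^ (1 / b)) s := by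
    intro s hs
    have hlin : HasDerivAt (fun s : ℝ => 1 - b * s) (-b) s := by
      simpa using ((hasDerivAt_id s).const_mul b).const_sub 1
    refine ((hlin.rpow_const (p := r) (Or.inl (hpos s hs).ne')).neg.div_const
      (1 + b)).congr_deriv ?_
    rw [hr, div_sub_one hb.ne, add_sub_cancel_right]
    field_simp
    exact mul_div_cancel_left₀ _ hb.ne
  have hlim : Tendsto (fun s => -(1 - b * s) ^ r / (1 + b)) atTop (𝓝 0) := by
    have hlin : Tendsto (fun s : ℝ => 1 - b * s) atTop atTop :=
      tendsto_atTop_add_const_left _ 1 <| by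
        simpa using (tendsto_id (α := ℝ)).const_mul_atTop (neg_pos.2 hb)
    have hrpow : Tendsto (fun u : ℝ => u ^ r) atTop (𝓝 0) := by
      simpa using tendsto_rpow_neg_atTop (y := -r) (neg_pos.2 (div_neg_of_pos_of_neg h1b hb))
    simpa using (hrpow.comp hlin).neg.div_const (1 + b)
  rw [integral_Ioi_of_hasDerivAt_of_nonneg' hderiv
    (fun s hs => rpow_nonneg (hpos s (le_of_lt hs)).le _) hlim]
  simp [neg_div]

lemma integral_Ioi_expQ_neg (hq : q < 2) : ∫ s in Ioi (0:ℝ), expQ q (-s) = 1 / (2 - q) := by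
  rcases eq_or_ne q 1 with rfl | hq1
  · simp only [expQ, if_true, integral_exp_neg_Ioi_zero]
    norm_num
  have hform : ∀ s, expQ q (-s) = max (1 - (1 - q) * s) 0 ^ (1 / (1 - q)) := fun s => by
    rw [expQ_of_ne_one hq1, mul_neg, ← sub_eq_add_neg]
  simp_rw [hform]
  rw [show 2 - q = 1 + (1 - q) by ring]
  rcases hq1.lt_or_gt with hq1 | hq1
  · exact integral_Ioi_max_one_sub_mul_rpow_of_pos (by linarith)
  · exact integral_Ioi_max_one_sub_mul_rpow_of_neg (by linarith) (by linarith)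

lemma qExpDensity_of_nonneg {x : ℝ} (hq : q < 2) (hx : 0 ≤ x) :
    qExpDensity q x = (2 - q) * expQ q (-x) := by
  rw [qExpDensity, if_pos hx, integral_Ioi_expQ_neg hq, div_div_eq_mul_div, div_one, mul_comm]

lemma qExpDensity_of_neg {x : ℝ} (hx : x < 0) : qExpDensity q x = 0 :=
  if_neg (not_le.2 hx)

end QExponential

section Escort

variable {α x y : ℝ}

lemma expDensity_of_nonneg (hx : 0 ≤ x) : expDensity x = exp (-x) :=
  if_pos hx

lemma expDensity_nonneg (x : ℝ) : 0 ≤ expDensity x := by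
  unfold expDensity
  split_ifs <;> positivity

noncomputable def escortCoord (α x : ℝ) : ℝ :=
  ∫ t in (0:ℝ)..x, expDensity t ^ (1 - α)

lemma escortCoord_one (x : ℝ) : escortCoord 1 x = x := by
  simp [escortCoord]

lemma escortCoord_nonneg (hx : 0 ≤ x) : 0 ≤ escortCoord α x :=
  intervalIntegral.integral_nonneg hx fun t _ => rpow_nonneg (expDensity_nonneg t) _

lemma escortCoord_of_ne_one (hα : α ≠ 1) (hx : 0 ≤ x) :
    escortCoord α x = (exp ((α - 1) * x) - 1) / (α - 1) := by
  have hα' : α - 1 ≠ 0 := sub_ne_zero.2 hα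
  have hintegrand : EqOn (fun t => expDensity t ^ (1 - α)) (fun t => exp ((α - 1) * t))
      (uIcc 0 x) := by
    intro t ht
    rw [uIcc_of_le hx] at ht
    simp only [expDensity_of_nonneg ht.1, ← exp_mul]
    ring_nf
  rw [escortCoord, intervalIntegral.integral_congr hintegrand,
    intervalIntegral.integral_comp_mul_left exp hα', integral_exp, mul_zero, exp_zero,
    smul_eq_mul]
  field_simp

lemma one_add_mul_escortCoord (α : ℝ) (hx : 0 ≤ x) :
    1 + (α - 1) * escortCoord α x = exp ((α - 1) * x) := by
  rcases eq_or_ne α 1 with rfl | hα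
  · simp
  rw [escortCoord_of_ne_one hα hx]
  field_simp [sub_ne_zero.2 hα]
  ring

lemma mem_image_escortCoord (hy : 0 ≤ y) (h : 0 < 1 + (α - 1) * y) :
    y ∈ escortCoord α '' Ici 0 := by
  rcases eq_or_ne α 1 with rfl | hα
  · exact ⟨y, hy, escortCoord_one y⟩
  have hα' : α - 1 ≠ 0 := sub_ne_zero.2 hα
  set x := log (1 + (α - 1) * y) / (α - 1)
  have hx : 0 ≤ x := by
    rcases hα.lt_or_gt with hα | hα
    · exact div_nonneg_of_nonpos (log_nonpos h.le (by nlinarith)) (by linarith)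
    · exact div_nonneg (log_nonneg (by nlinarith)) (by linarith)
  have hexp : exp ((α - 1) * x) = 1 + (α - 1) * y := by
    rw [mul_div_cancel₀ _ hα', exp_log h]
  refine ⟨x, hx, mul_left_cancel₀ hα' ?_⟩
  linarith [one_add_mul_escortCoord α hx]

end Escort

section ScaledQExponential

variable {α y : ℝ}

lemma mul_qExpDensity_two_sub_inv (hα : 0 < α) (hy : 0 ≤ y) :
    α * qExpDensity (2 - 1 / α) (α * y) = expQ (2 - 1 / α) (-(α * y)) := by
  rw [qExpDensity_of_nonneg (by linarith [one_div_pos.2 hα]) (by positivity), sub_sub_cancel,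
    ← mul_assoc, mul_one_div_cancel hα.ne', one_mul]

lemma expQ_two_sub_inv_neg_mul (hα0 : α ≠ 0) (hα1 : α ≠ 1) (y : ℝ) :
    expQ (2 - 1 / α) (-(α * y)) = max (1 + (α - 1) * y) 0 ^ (α / (1 - α)) := by
  have h1q : 1 - (2 - 1 / α) = (1 - α) / α := by
    field_simp
    ring
  have hq : 2 - 1 / α ≠ 1 := fun h =>
    div_ne_zero (sub_ne_zero.2 hα1.symm) hα0 (by rw [← h1q, h, sub_self])
  have hbase : 1 + (1 - α) / α * -(α * y) = 1 + (α - 1) * y := by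
    field_simp
    ring
  rw [expQ_of_ne_one hq, h1q, hbase, one_div_div]

lemma expQ_neg_mul_escortCoord (hα : 0 < α) {x : ℝ} (hx : 0 ≤ x) :
    expQ (2 - 1 / α) (-(α * escortCoord α x)) = exp (-(α * x)) := by
  rcases eq_or_ne α 1 with rfl | hα1
  · norm_num [expQ, escortCoord_one]
  rw [expQ_two_sub_inv_neg_mul hα.ne' hα1, one_add_mul_escortCoord α hx,
    max_eq_left (exp_pos _).le, ← exp_mul]
  congr 1
  field_simp [sub_ne_zero.2 hα1.symm]
  ring

lemma expQ_two_sub_inv_neg_mul_eq_zero (hα : 0 < α) (hy : 1 + (α - 1) * y ≤ 0) :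
    expQ (2 - 1 / α) (-(α * y)) = 0 := by
  have hα1 : α ≠ 1 := by rintro rfl; norm_num at hy
  rw [expQ_two_sub_inv_neg_mul hα.ne' hα1, max_eq_right hy,
    zero_rpow (div_ne_zero hα.ne' (sub_ne_zero.2 hα1.symm))]

end ScaledQExponential

/-- The differential-escort transform of order `α` of the exponential density is
the `α`-scaled `q`-exponential density with `q = 2 - 1/α`: the function
`g = (f_q)_{(α)}`, i.e. `g(y) = α f_q(α y)`, satisfies the defining relation
`g(y(x)) = f₁(x)^α` on the support of `f₁`, where `y(x) = ∫₀^x f₁(t)^(1-α) dt`,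
and vanishes off the image of the support. -/
theorem stmt18 (α : ℝ) (hα : 0 < α) :
    (∀ x : ℝ, 0 ≤ x →
      α * qExpDensity (2 - 1/α) (α * (∫ t in (0:ℝ)..x, expDensity t ^ (1 - α)))
        = expDensity x ^ α) ∧
    (∀ y : ℝ, y ∉ (fun x => ∫ t in (0:ℝ)..x, expDensity t ^ (1 - α)) '' Set.Ici (0:ℝ) →
      α * qExpDensity (2 - 1/α) (α * y) = 0) := by
  refine ⟨fun x hx => ?_, fun y hy => ?_⟩
  · change α * qExpDensity _ (α * escortCoord α x) = _
    rw [mul_qExpDensity_two_sub_inv hα (escortCoord_nonneg hx), expQ_neg_mul_escortCoord hα hx,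
      expDensity_of_nonneg hx, ← exp_mul]
    ring_nf
  · change y ∉ escortCoord α '' Ici 0 at hy
    rcases lt_or_ge y 0 with hy0 | hy0
    · rw [qExpDensity_of_neg (mul_neg_of_pos_of_neg hα hy0), mul_zero]
    rw [mul_qExpDensity_two_sub_inv hα hy0]
    exact expQ_two_sub_inv_neg_mul_eq_zero hα (not_lt.1 fun h => hy (mem_image_escortCoord hy0 h))
end
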